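/- arXiv:1501.06222 — 4 statements merged into one kernel-verified Lean document; each statement's English description precedes it below -/
import Mathlib

section
/- For any orthonormal basis {|π⟩, |π⊥⟩} of a 2-dimensional subspace H of C² ⊗ H_B (H_B finite dimensional), there exists an orthonormal basis {|0⟩_A, |1⟩_A} of C² and vectors η_0, η_1, ν_0, ν_1 ∈ H_B such that |π⟩ = |0⟩_A|η_0⟩ + |1⟩_A|η_1⟩, |π⊥⟩ = |0⟩_A|ν_0⟩ + |1⟩_A|ν_1⟩, and ⟨η_k|ν_k⟩ = 0 for each k ∈ {0,1}. -/
/-!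
With `η_k = (⟨e_k| ⊗ 1) π` and `ν_k = (⟨e_k| ⊗ 1) π⊥`, one has `⟨η_k, ν_k⟩ = ⟨e_k, T e_k⟩` for the
operator `T = Tr_B |π⊥⟩⟨π|` on `ℂ²`, whose trace is `⟨π, π⊥⟩ = 0`. So it suffices that a traceless
operator on `ℂ²` has zero diagonal in some orthonormal basis. In a basis `u₀, u₁` where `T` has
diagonal `a, -a`, take `v = r u₀ + z u₁` with `|z| = 1` chosen so that `⟨u₀, T u₁⟩ z + ⟨u₁, T u₀⟩ z̄`
is a real multiple `ρ a` of `a`; then `⟨v, T v⟩ = a (r² + ρ r - 1)`, which vanishes for a real root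
`r`. Completing `v / ‖v‖` to an orthonormal basis, the second diagonal entry is `tr T - 0 = 0`.
-/

noncomputable section
open scoped InnerProductSpace ComplexConjugate ComplexOrder

variable {E F : Type*} [NormedAddCommGroup E] [InnerProductSpace ℂ E]
  [NormedAddCommGroup F] [InnerProductSpace ℂ F]

/-- rank-one operator |x⟩⟨y| : E → F -/
def rankOne (x : F) (y : E) : E →ₗ[ℂ] F where
  toFun z := ⟪y, z⟫_ℂ • x
  map_add' a b := by simp [inner_add_right, add_smul]
  map_smul' c a := by simp [inner_smul_right, smul_smul]

/-- positive semidefinite operator (using the complex partial order) -/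
def IsPSD {E : Type*} [NormedAddCommGroup E] [InnerProductSpace ℂ E]
    (T : E →ₗ[ℂ] E) : Prop := ∀ x : E, 0 ≤ ⟪x, T x⟫_ℂ

/-- simple tensor v ⊗ b in ℂⁿ ⊗ H_B, modeled as `PiLp 2` -/
def tp {n : ℕ} {HB : Type*} [NormedAddCommGroup HB] [InnerProductSpace ℂ HB]
    (v : EuclideanSpace ℂ (Fin n)) (b : HB) : PiLp 2 (fun _ : Fin n => HB) :=
  (WithLp.equiv 2 _).symm fun i => v i • b

/-- operator tensor M ⊗ X on ℂⁿ ⊗ H_B, where M is a matrix on ℂⁿ -/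
def opT {n : ℕ} {HB : Type*} [NormedAddCommGroup HB] [InnerProductSpace ℂ HB]
    (M : Matrix (Fin n) (Fin n) ℂ) (X : HB →ₗ[ℂ] HB) :
    PiLp 2 (fun _ : Fin n => HB) →ₗ[ℂ] PiLp 2 (fun _ : Fin n => HB) where
  toFun f := (WithLp.equiv 2 _).symm fun i => ∑ j, M i j • X (f j)
  map_add' f g := by
    ext i
    simp only [WithLp.equiv_symm_apply, PiLp.toLp_apply, PiLp.add_apply, map_add, smul_add]
    exact Finset.sum_add_distrib
  map_smul' c f := by
    ext i
    simp only [WithLp.equiv_symm_apply, PiLp.toLp_apply, PiLp.smul_apply, map_smul, RingHom.id_apply,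
      Finset.smul_sum]
    exact Finset.sum_congr rfl fun j _ => (smul_comm _ _ _)

/-- outer product matrix |v⟩⟨v| -/
def outerM {n : ℕ} (v : EuclideanSpace ℂ (Fin n)) : Matrix (Fin n) (Fin n) ℂ :=
  fun i j => v i * conj (v j)

/-- orthogonal projection onto a subspace, as an operator -/
def projOp {E : Type*} [NormedAddCommGroup E] [InnerProductSpace ℂ E]
    [FiniteDimensional ℂ E] (K : Submodule ℂ E) : E →ₗ[ℂ] E :=
  (K.subtypeL.comp (K.orthogonalProjectionOnto)).toLinearMap

open Complex in
theorem exists_norm_eq_one_im_mul_eq_zero (d : ℂ) : ∃ z : ℂ, ‖z‖ = 1 ∧ (d * z).im = 0 := by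
  refine ⟨exp (-(arg d : ℂ) * I), by simpa using norm_exp_ofReal_mul_I (-arg d), ?_⟩
  nth_rw 1 [← norm_mul_exp_arg_mul_I d]
  rw [mul_assoc, ← exp_add]
  simp

theorem exists_sq_add_mul_sub_one_eq_zero (ρ : ℝ) : ∃ r : ℝ, r ^ 2 + ρ * r - 1 = 0 := by
  obtain ⟨r, hr⟩ := exists_quadratic_eq_zero (K := ℝ) (b := ρ) (c := -1) one_ne_zero
    ⟨√(ρ ^ 2 + 4), by rw [discrim, Real.mul_self_sqrt (by positivity)]; ring⟩
  exact ⟨r, by linear_combination hr⟩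

theorem exists_real_unit_quadratic_form_eq_zero (a b c : ℂ) : ∃ (r : ℝ) (z : ℂ), ‖z‖ = 1 ∧
    a * r ^ 2 + b * r * z + c * r * conj z - a * (conj z * z) = 0 := by
  rcases eq_or_ne a 0 with rfl | ha
  · exact ⟨0, 1, by simp⟩
  obtain ⟨z, hz, hdz⟩ := exists_norm_eq_one_im_mul_eq_zero (b / a - conj (c / a))
  set w := b / a * z + c / a * conj z with hw
  have hw_real : (w.re : ℂ) = w := by
    have hw_split : w = (b / a - conj (c / a)) * z + 2 * ((conj (c / a) * z).re : ℂ) := by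
      rw [Complex.re_eq_add_conj, hw]
      simp only [map_mul, Complex.conj_conj]
      ring
    refine Complex.ext rfl ?_
    rw [hw_split, Complex.add_im, hdz]
    simp
  obtain ⟨r, hr⟩ := exists_sq_add_mul_sub_one_eq_zero w.re
  refine ⟨r, z, hz, ?_⟩
  have hzz : conj z * z = 1 := by simp [Complex.conj_mul', hz]
  have hrC : (r : ℂ) ^ 2 + w.re * r - 1 = 0 := by exact_mod_cast hr
  rw [hw_real, hw] at hrC
  field_simp at hrC
  rw [hzz]
  linear_combination hrC

section TwoDimensional

variable {V : Type*} [NormedAddCommGroup V] [InnerProductSpace ℂ V] [FiniteDimensional ℂ V]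

theorem LinearMap.exists_ne_zero_inner_apply_self_eq_zero (hV : Module.finrank ℂ V = 2)
    (T : V →ₗ[ℂ] V) (hT : trace ℂ V T = 0) : ∃ v ≠ 0, ⟪v, T v⟫_ℂ = 0 := by
  let u := (stdOrthonormalBasis ℂ V).reindex (finCongr hV)
  have hdiag : ⟪u 1, T (u 1)⟫_ℂ = -⟪u 0, T (u 0)⟫_ℂ := by
    rw [T.trace_eq_sum_inner u, Fin.sum_univ_two] at hT
    linear_combination hT
  obtain ⟨r, z, hz, hrz⟩ :=
    exists_real_unit_quadratic_form_eq_zero ⟪u 0, T (u 0)⟫_ℂ ⟪u 0, T (u 1)⟫_ℂ ⟪u 1, T (u 0)⟫_ℂ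
  refine ⟨(r : ℂ) • u 0 + z • u 1, fun h0 => ?_, ?_⟩
  · have := congrArg (fun v => ⟪u 1, v⟫_ℂ) h0
    simp [orthonormal_iff_ite.mp u.orthonormal] at this
    simp [this] at hz
  · simp only [map_add, map_smul, inner_add_left, inner_add_right, inner_smul_left,
      inner_smul_right, Complex.conj_ofReal, hdiag]
    linear_combination hrz

theorem LinearMap.exists_orthonormalBasis_inner_apply_self_eq_zero (hV : Module.finrank ℂ V = 2)
    (T : V →ₗ[ℂ] V) (hT : trace ℂ V T = 0) :
    ∃ b : OrthonormalBasis (Fin 2) ℂ V, ∀ k, ⟪b k, T (b k)⟫_ℂ = 0 := by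
  obtain ⟨v, hv0, hv⟩ := T.exists_ne_zero_inner_apply_self_eq_zero hV hT
  set w := ((‖v‖ : ℂ)⁻¹) • v
  have hw : ⟪w, T w⟫_ℂ = 0 := by simp [w, hv]
  have hw_on : Orthonormal ℂ (({0} : Set (Fin 2)).domRestrict fun _ => w) :=
    ⟨fun _ => norm_smul_inv_norm hv0, fun i j hij => (hij (Subsingleton.elim i j)).elim⟩
  obtain ⟨b, hb⟩ := hw_on.exists_orthonormalBasis_extension_of_card_eq (by simpa using hV)
  have hb0 : ⟪b 0, T (b 0)⟫_ℂ = 0 := by rw [hb 0 rfl]; exact hw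
  refine ⟨b, fun k => ?_⟩
  have hsum := T.trace_eq_sum_inner b
  rw [hT, Fin.sum_univ_two, hb0, zero_add] at hsum
  fin_cases k
  · exact hb0
  · exact hsum.symm

end TwoDimensional

section PartialInner

variable {HB : Type*} [NormedAddCommGroup HB] [InnerProductSpace ℂ HB] {n : ℕ}

def partialInner (v : EuclideanSpace ℂ (Fin n)) (f : PiLp 2 (fun _ : Fin n => HB)) : HB :=
  ∑ i, conj (v i) • f i

/-- The matrix of `Tr_B |g⟩⟨f|` on `ℂⁿ`. -/
def partialTraceOuter (f g : PiLp 2 (fun _ : Fin n => HB)) : Matrix (Fin n) (Fin n) ℂ :=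
  Matrix.of fun j i => ⟪f i, g j⟫_ℂ

theorem trace_toEuclideanLin_partialTraceOuter (f g : PiLp 2 (fun _ : Fin n => HB)) :
    LinearMap.trace ℂ _ (Matrix.toEuclideanLin (partialTraceOuter f g)) = ⟪f, g⟫_ℂ := by
  rw [LinearMap.trace_eq_sum_inner _ (EuclideanSpace.basisFun (Fin n) ℂ), PiLp.inner_apply]
  simp [EuclideanSpace.inner_single_left, Matrix.toLpLin_apply, partialTraceOuter]

theorem inner_partialInner (v : EuclideanSpace ℂ (Fin n)) (f g : PiLp 2 (fun _ : Fin n => HB)) :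
    ⟪partialInner v f, partialInner v g⟫_ℂ =
      ⟪v, Matrix.toEuclideanLin (partialTraceOuter f g) v⟫_ℂ := by
  simp only [partialInner, sum_inner, inner_sum, inner_smul_left, inner_smul_right,
    Complex.conj_conj]
  simp [partialTraceOuter, Matrix.toLpLin_apply, PiLp.inner_apply, Matrix.mulVec, dotProduct,
    Finset.mul_sum, Finset.sum_mul]
  exact Finset.sum_congr rfl fun _ _ => Finset.sum_congr rfl fun _ _ => by ring

theorem OrthonormalBasis.sum_tp_partialInner
    (e : OrthonormalBasis (Fin n) ℂ (EuclideanSpace ℂ (Fin n)))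
    (f : PiLp 2 (fun _ : Fin n => HB)) :
    ∑ k, tp (e k) (partialInner (e k) f) = f := by
  have hcompl : ∀ i j, ∑ k, e k j * conj (e k i) = if i = j then 1 else 0 := fun i j => by
    simpa [EuclideanSpace.inner_single_left, EuclideanSpace.inner_single_right] using
      e.sum_inner_mul_inner (EuclideanSpace.single j 1) (EuclideanSpace.single i 1)
  ext j
  simp only [tp, partialInner, WithLp.equiv_symm_apply, WithLp.ofLp_sum,
    Finset.sum_apply, Finset.smul_sum, smul_smul]
  rw [Finset.sum_comm]
  simp_rw [← Finset.sum_smul, hcompl, ite_smul, one_smul, zero_smul, Finset.sum_ite_eq']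
  simp

end PartialInner

theorem walgate_form_exists_general
    {HB : Type*} [NormedAddCommGroup HB] [InnerProductSpace ℂ HB]
    (pi pip : PiLp 2 (fun _ : Fin 2 => HB)) (h : Orthonormal ℂ ![pi, pip]) :
    ∃ (e : Fin 2 → EuclideanSpace ℂ (Fin 2)) (η ν : Fin 2 → HB),
      Orthonormal ℂ e ∧
      pi = tp (e 0) (η 0) + tp (e 1) (η 1) ∧
      pip = tp (e 0) (ν 0) + tp (e 1) (ν 1) ∧
      ∀ k : Fin 2, ⟪η k, ν k⟫_ℂ = 0 := by
  have horth : ⟪pi, pip⟫_ℂ = 0 := by simpa using h.2 (show (0 : Fin 2) ≠ 1 by decide)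
  obtain ⟨e, he⟩ :=
    (Matrix.toEuclideanLin (partialTraceOuter pi pip)).exists_orthonormalBasis_inner_apply_self_eq_zero
      finrank_euclideanSpace_fin (by rw [trace_toEuclideanLin_partialTraceOuter, horth])
  refine ⟨e, fun k => partialInner (e k) pi, fun k => partialInner (e k) pip, e.orthonormal,
    ?_, ?_, fun k => (inner_partialInner _ _ _).trans (he k)⟩
  · simpa [Fin.sum_univ_two] using (e.sum_tp_partialInner pi).symm
  · simpa [Fin.sum_univ_two] using (e.sum_tp_partialInner pip).symm

/-- any orthonormal basis {π, π⊥} of a 2D subspace of ℂ² ⊗ H_B can be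
written with a suitable orthonormal basis of ℂ² and Bob vectors η_k ⊥ ν_k. -/
theorem walgate_form_exists
    {HB : Type*} [NormedAddCommGroup HB] [InnerProductSpace ℂ HB] [FiniteDimensional ℂ HB]
    (pi pip : PiLp 2 (fun _ : Fin 2 => HB)) (h : Orthonormal ℂ ![pi, pip]) :
    ∃ (e : Fin 2 → EuclideanSpace ℂ (Fin 2)) (η ν : Fin 2 → HB),
      Orthonormal ℂ e ∧
      pi = tp (e 0) (η 0) + tp (e 1) (η 1) ∧
      pip = tp (e 0) (ν 0) + tp (e 1) (ν 1) ∧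
      ∀ k : Fin 2, ⟪η k, ν k⟫_ℂ = 0 :=
  walgate_form_exists_general pi pip h
end
end

section
/- Let U_SA be a unitary on C² ⊗ C² with U_SA|s_0⟩|0⟩_A = (sin θ|s_0⟩ + cos θ|s_1⟩)|0⟩_A and U_SA|s_0⟩|1⟩_A = |s_1⟩|1⟩_A, let U = U_SA ⊗ I_B, P the orthogonal projection onto H ⊆ C²_A ⊗ H_B, P̃ = U(|s_0⟩⟨s_0| ⊗ P)U†, Z̃_0 = P̃(|s_0⟩⟨s_0| ⊗ I_{AB})P̃, and Z_0 = P(|0⟩⟨0|_A ⊗ I_B)P. Then U† Z̃_0 U = sin²θ · |s_0⟩⟨s_0| ⊗ Z_0. -/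
noncomputable section
open scoped InnerProductSpace ComplexConjugate ComplexOrder

variable {E F : Type*} [NormedAddCommGroup E] [InnerProductSpace ℂ E]
  [NormedAddCommGroup F] [InnerProductSpace ℂ F]

/-- operator U_SA ⊗ I_B on ℂⁿ ⊗ (ℂᵐ ⊗ H_B), where U_SA is given by its matrix on
ℂⁿ ⊗ ℂᵐ. -/
def opU {n m : ℕ} {HB : Type*} [NormedAddCommGroup HB] [InnerProductSpace ℂ HB]
    (U : Matrix (Fin n × Fin m) (Fin n × Fin m) ℂ) :
    PiLp 2 (fun _ : Fin n => PiLp 2 (fun _ : Fin m => HB)) →ₗ[ℂ]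
      PiLp 2 (fun _ : Fin n => PiLp 2 (fun _ : Fin m => HB)) where
  toFun f := (WithLp.equiv 2 _).symm fun i =>
    (WithLp.equiv 2 _).symm fun j => ∑ p : Fin n × Fin m, U (i, j) p • f p.1 p.2
  map_add' f g := by
    ext i j
    simp only [WithLp.equiv_symm_apply, PiLp.toLp_apply, PiLp.add_apply, smul_add]
    exact Finset.sum_add_distrib
  map_smul' c f := by
    ext i j
    simp only [WithLp.equiv_symm_apply, PiLp.toLp_apply, PiLp.smul_apply, RingHom.id_apply, Finset.smul_sum]
    exact Finset.sum_congr rfl fun p _ => (smul_comm _ _ _)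

/-!
Since `U†U = 1`, the left-hand side collapses to `Q U† S U Q` with `Q = |s₀⟩⟨s₀| ⊗ P` and
`S = |s₀⟩⟨s₀| ⊗ I`, so only the compression `⟨s₀|U|s₀⟩` of `U` to `ℂ²_A ⊗ H_B` matters.
Splitting `ℂ²_A ⊗ H_B` along the basis `a`, the two prescribed columns of `U_SA` give
`⟨s₀|U|s₀⟩ = sin θ · |0⟩⟨0|_A ⊗ I_B`; as `sin θ` is real this operator is self-adjoint, so
`⟨s₀|U†|s₀⟩` is the same operator, and `⟨s₀|U†|s₀⟩⟨s₀|U|s₀⟩ = sin²θ · |0⟩⟨0|_A ⊗ I_B`.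
Sandwiching between the two copies of `P` gives `sin²θ · |s₀⟩⟨s₀| ⊗ Z₀`.
-/

section KetBra

variable {n : ℕ} {HB : Type*} [NormedAddCommGroup HB] [InnerProductSpace ℂ HB]

lemma tp_apply (v : EuclideanSpace ℂ (Fin n)) (b : HB) (i : Fin n) : tp v b i = v i • b := rfl

/-- The operator `|v⟩ ⊗ I : H_B → ℂⁿ ⊗ H_B`. -/
def ketTensor (v : EuclideanSpace ℂ (Fin n)) : HB →ₗ[ℂ] PiLp 2 (fun _ : Fin n => HB) where
  toFun := tp v
  map_add' b b' := by ext i; exact smul_add _ _ _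
  map_smul' c b := by ext i; exact smul_comm _ _ _

/-- The operator `⟨v| ⊗ I : ℂⁿ ⊗ H_B → H_B`. -/
def braTensor (v : EuclideanSpace ℂ (Fin n)) : PiLp 2 (fun _ : Fin n => HB) →ₗ[ℂ] HB where
  toFun f := ∑ i, conj (v i) • f i
  map_add' f g := by simp [smul_add, Finset.sum_add_distrib]
  map_smul' c f := by
    simp only [PiLp.smul_apply, RingHom.id_apply, Finset.smul_sum]
    exact Finset.sum_congr rfl fun i _ => smul_comm _ _ _

lemma ketTensor_apply (v : EuclideanSpace ℂ (Fin n)) (b : HB) : ketTensor v b = tp v b := rfl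

lemma braTensor_apply (v : EuclideanSpace ℂ (Fin n)) (f : PiLp 2 (fun _ : Fin n => HB)) :
    braTensor v f = ∑ i, conj (v i) • f i := rfl

lemma braTensor_ketTensor (v w : EuclideanSpace ℂ (Fin n)) (b : HB) :
    braTensor v (ketTensor w b) = ⟪v, w⟫_ℂ • b := by
  simp only [braTensor_apply, ketTensor_apply, tp_apply, smul_smul, PiLp.inner_apply,
    RCLike.inner_apply, Finset.sum_smul, mul_comm]

lemma inner_ketTensor_left (v : EuclideanSpace ℂ (Fin n)) (b : HB)
    (f : PiLp 2 (fun _ : Fin n => HB)) :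
    ⟪ketTensor v b, f⟫_ℂ = ⟪b, braTensor v f⟫_ℂ := by
  simp only [ketTensor_apply, braTensor_apply, tp_apply, PiLp.inner_apply, inner_smul_left,
    inner_sum, inner_smul_right]

lemma adjoint_ketTensor [FiniteDimensional ℂ HB] (v : EuclideanSpace ℂ (Fin n)) :
    LinearMap.adjoint (ketTensor (HB := HB) v) = braTensor v := by
  symm
  rw [LinearMap.eq_adjoint_iff]
  intro f b
  rw [← inner_conj_symm, ← inner_ketTensor_left, inner_conj_symm]

lemma adjoint_braTensor [FiniteDimensional ℂ HB] (v : EuclideanSpace ℂ (Fin n)) :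
    LinearMap.adjoint (braTensor (HB := HB) v) = ketTensor v := by
  rw [← adjoint_ketTensor, LinearMap.adjoint_adjoint]

lemma opT_outerM (v : EuclideanSpace ℂ (Fin n)) (X : HB →ₗ[ℂ] HB) :
    opT (outerM v) X = ketTensor v ∘ₗ X ∘ₗ braTensor v := by
  ext f i
  simp [opT, outerM, ketTensor_apply, braTensor_apply, tp, smul_smul, mul_comm]

lemma Orthonormal.sum_mul_conj_eq_ite {a : Fin n → EuclideanSpace ℂ (Fin n)}
    (ha : Orthonormal ℂ a) (i j : Fin n) :
    ∑ k, a k i * conj (a k j) = if i = j then 1 else 0 := by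
  have hspan := ha.linearIndependent.span_eq_top_of_card_eq_finrank' (by simp)
  have := congr_arg (· i)
    ((OrthonormalBasis.mk ha hspan.ge).sum_repr' (EuclideanSpace.single j 1))
  simpa [EuclideanSpace.inner_single_right, mul_comm, eq_comm] using this

lemma Orthonormal.sum_ketTensor_braTensor {a : Fin n → EuclideanSpace ℂ (Fin n)}
    (ha : Orthonormal ℂ a) (f : PiLp 2 (fun _ : Fin n => HB)) :
    ∑ k, ketTensor (a k) (braTensor (a k) f) = f := by
  ext i
  simp only [ketTensor_apply, braTensor_apply, tp_apply, WithLp.ofLp_sum, Finset.sum_apply,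
    Finset.smul_sum, smul_smul]
  rw [Finset.sum_comm]
  simp only [← Finset.sum_smul, ha.sum_mul_conj_eq_ite, ite_smul, one_smul, zero_smul,
    Finset.sum_ite_eq, Finset.mem_univ, if_true]

end KetBra

section TensorIdentity

variable {n m : ℕ} {HB : Type*} [NormedAddCommGroup HB] [InnerProductSpace ℂ HB]

lemma opU_apply (M : Matrix (Fin n × Fin m) (Fin n × Fin m) ℂ)
    (f : PiLp 2 (fun _ : Fin n => PiLp 2 (fun _ : Fin m => HB))) (i : Fin n) (j : Fin m) :
    opU M f i j = ∑ p : Fin n × Fin m, M (i, j) p • f p.1 p.2 := rfl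

lemma opU_mul (M N : Matrix (Fin n × Fin m) (Fin n × Fin m) ℂ) :
    opU (HB := HB) (M * N) = opU M ∘ₗ opU N := by
  ext f i j
  simp only [LinearMap.comp_apply, opU_apply, Matrix.mul_apply, Finset.smul_sum, Finset.sum_smul,
    smul_smul]
  exact Finset.sum_comm

lemma opU_one :
    opU (HB := HB) (1 : Matrix (Fin n × Fin m) (Fin n × Fin m) ℂ) = LinearMap.id := by
  ext f i j
  simp [opU_apply, Fintype.sum_prod_type, Matrix.one_apply, Prod.ext_iff, ite_and, ite_smul]

lemma adjoint_opU [FiniteDimensional ℂ HB] (M : Matrix (Fin n × Fin m) (Fin n × Fin m) ℂ) :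
    LinearMap.adjoint (opU (HB := HB) M) = opU (star M) := by
  symm
  rw [LinearMap.eq_adjoint_iff]
  intro f g
  simp only [PiLp.inner_apply, opU_apply, sum_inner, inner_sum, inner_smul_left,
    inner_smul_right, Matrix.star_apply, RCLike.star_def, starRingEnd_self_apply]
  rw [← Fintype.sum_prod_type']
  conv_rhs => rw [← Fintype.sum_prod_type']
  exact Finset.sum_comm

lemma adjoint_opU_comp_opU [FiniteDimensional ℂ HB]
    {M : Matrix (Fin n × Fin m) (Fin n × Fin m) ℂ}
    (hM : M ∈ Matrix.unitaryGroup (Fin n × Fin m) ℂ) :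
    LinearMap.adjoint (opU (HB := HB) M) ∘ₗ opU M = LinearMap.id := by
  rw [adjoint_opU, ← opU_mul, Matrix.mem_unitaryGroup_iff'.mp hM, opU_one]

end TensorIdentity

section Compression

variable {HB : Type*} [NormedAddCommGroup HB] [InnerProductSpace ℂ HB]
  {s a : Fin 2 → EuclideanSpace ℂ (Fin 2)} {θ : ℝ}
  {Usa : Matrix (Fin 2 × Fin 2) (Fin 2 × Fin 2) ℂ}

lemma braTensor_comp_opU_comp_ketTensor (hs : Orthonormal ℂ s) (ha : Orthonormal ℂ a)
    (hU0 : ∀ b : HB, opU Usa (tp (s 0) (tp (a 0) b)) =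
      tp ((Real.sin θ : ℂ) • s 0 + (Real.cos θ : ℂ) • s 1) (tp (a 0) b))
    (hU1 : ∀ b : HB, opU Usa (tp (s 0) (tp (a 1) b)) = tp (s 1) (tp (a 1) b)) :
    braTensor (s 0) ∘ₗ opU (HB := HB) Usa ∘ₗ ketTensor (s 0) =
      (Real.sin θ : ℂ) • (ketTensor (a 0) ∘ₗ braTensor (a 0)) := by
  refine LinearMap.ext fun η => ?_
  have h00 : ⟪s 0, s 0⟫_ℂ = 1 := by simpa using orthonormal_iff_ite.mp hs 0 0
  have h01 : ⟪s 0, s 1⟫_ℂ = 0 := by simpa using orthonormal_iff_ite.mp hs 0 1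
  have hU0' (b : HB) : opU Usa (ketTensor (s 0) (ketTensor (a 0) b)) =
      ketTensor ((Real.sin θ : ℂ) • s 0 + (Real.cos θ : ℂ) • s 1) (ketTensor (a 0) b) := hU0 b
  have hU1' (b : HB) : opU Usa (ketTensor (s 0) (ketTensor (a 1) b)) =
      ketTensor (s 1) (ketTensor (a 1) b) := hU1 b
  conv_lhs => rw [← ha.sum_ketTensor_braTensor η]
  simp only [LinearMap.comp_apply, LinearMap.smul_apply, Fin.sum_univ_two, map_add, hU0', hU1',
    braTensor_ketTensor, inner_add_right, inner_smul_right, h00, h01, mul_one, mul_zero,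
    add_zero, zero_smul]

lemma braTensor_comp_adjoint_opU_comp_ketTensor [FiniteDimensional ℂ HB]
    (hs : Orthonormal ℂ s) (ha : Orthonormal ℂ a)
    (hU0 : ∀ b : HB, opU Usa (tp (s 0) (tp (a 0) b)) =
      tp ((Real.sin θ : ℂ) • s 0 + (Real.cos θ : ℂ) • s 1) (tp (a 0) b))
    (hU1 : ∀ b : HB, opU Usa (tp (s 0) (tp (a 1) b)) = tp (s 1) (tp (a 1) b)) :
    braTensor (s 0) ∘ₗ LinearMap.adjoint (opU (HB := HB) Usa) ∘ₗ ketTensor (s 0) =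
      (Real.sin θ : ℂ) • (ketTensor (a 0) ∘ₗ braTensor (a 0)) := by
  have h := congr_arg LinearMap.adjoint (braTensor_comp_opU_comp_ketTensor hs ha hU0 hU1)
  simpa only [map_smulₛₗ, Complex.conj_ofReal, LinearMap.adjoint_comp, adjoint_ketTensor,
    adjoint_braTensor, LinearMap.comp_assoc] using h

end Compression

/-- U† Z̃₀ U = sin²θ · |s₀⟩⟨s₀| ⊗ Z₀. -/
theorem conjugated_Z0
    {HB : Type*} [NormedAddCommGroup HB] [InnerProductSpace ℂ HB] [FiniteDimensional ℂ HB]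
    (s a : Fin 2 → EuclideanSpace ℂ (Fin 2)) (hs : Orthonormal ℂ s) (ha : Orthonormal ℂ a)
    (θ : ℝ)
    (Usa : Matrix (Fin 2 × Fin 2) (Fin 2 × Fin 2) ℂ)
    (hUsa : Usa ∈ Matrix.unitaryGroup (Fin 2 × Fin 2) ℂ)
    (hU0 : ∀ b : HB, opU Usa (tp (s 0) (tp (a 0) b)) =
      tp ((Real.sin θ : ℂ) • s 0 + (Real.cos θ : ℂ) • s 1) (tp (a 0) b))
    (hU1 : ∀ b : HB, opU Usa (tp (s 0) (tp (a 1) b)) = tp (s 1) (tp (a 1) b))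
    (H : Submodule ℂ (PiLp 2 (fun _ : Fin 2 => HB))) :
    LinearMap.adjoint (opU (HB := HB) Usa) ∘ₗ
        ((opU (HB := HB) Usa ∘ₗ opT (outerM (s 0)) (projOp H) ∘ₗ
            LinearMap.adjoint (opU (HB := HB) Usa)) ∘ₗ
          opT (outerM (s 0)) (LinearMap.id (R := ℂ) (M := PiLp 2 (fun _ : Fin 2 => HB))) ∘ₗ
          (opU (HB := HB) Usa ∘ₗ opT (outerM (s 0)) (projOp H) ∘ₗ
            LinearMap.adjoint (opU (HB := HB) Usa))) ∘ₗ
        opU (HB := HB) Usa =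
      ((Real.sin θ ^ 2 : ℝ) : ℂ) •
        opT (outerM (s 0))
          (projOp H ∘ₗ opT (outerM (a 0)) (LinearMap.id (R := ℂ) (M := HB)) ∘ₗ projOp H) := by
  have hVV (x : PiLp 2 (fun _ : Fin 2 => PiLp 2 (fun _ : Fin 2 => HB))) :
      LinearMap.adjoint (opU (HB := HB) Usa) (opU Usa x) = x := by
    rw [← LinearMap.comp_apply, adjoint_opU_comp_opU hUsa, LinearMap.id_apply]
  have hW (η : PiLp 2 (fun _ : Fin 2 => HB)) :
      braTensor (s 0) (opU (HB := HB) Usa (ketTensor (s 0) η)) =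
        (Real.sin θ : ℂ) • ketTensor (a 0) (braTensor (a 0) η) :=
    LinearMap.congr_fun (braTensor_comp_opU_comp_ketTensor hs ha hU0 hU1) η
  have hW' (η : PiLp 2 (fun _ : Fin 2 => HB)) :
      braTensor (s 0) (LinearMap.adjoint (opU (HB := HB) Usa) (ketTensor (s 0) η)) =
        (Real.sin θ : ℂ) • ketTensor (a 0) (braTensor (a 0) η) :=
    LinearMap.congr_fun (braTensor_comp_adjoint_opU_comp_ketTensor hs ha hU0 hU1) η
  have ha00 : ⟪a 0, a 0⟫_ℂ = 1 := by simpa using orthonormal_iff_ite.mp ha 0 0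
  refine LinearMap.ext fun f => ?_
  simp only [opT_outerM, LinearMap.comp_apply, LinearMap.smul_apply, LinearMap.id_apply, hVV, hW,
    hW', map_smul, braTensor_ketTensor, ha00, one_smul, smul_smul]
  rw [Complex.ofReal_pow, sq]
end
end

section
/- Let Π_1 = γ_1|π⟩⟨π| with 0 < γ_1 ≤ 1, Σ_{m=1}^M Π_m = P = |π⟩⟨π| + |π⊥⟩⟨π⊥|, Z_0 = η_0|π⟩⟨π| + ν_0|π⊥⟩⟨π⊥| with η_0 ≥ ν_0 ≥ 0 and γ_1 < η_0 − (1−γ_1)ν_0. Set sin²θ = γ_1/(η_0 − (1−γ_1)ν_0), c̃_1 = 1, and c̃_m = ν_0 sin²θ for m ≥ 2. Then 0 ≤ c̃_m ≤ 1 for all m, sin²θ ≤ 1, and Σ_m c̃_m Π_m = sin²θ · Z_0. -/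
noncomputable section
open scoped InnerProductSpace ComplexConjugate ComplexOrder

variable {E F : Type*} [NormedAddCommGroup E] [InnerProductSpace ℂ E]
  [NormedAddCommGroup F] [InnerProductSpace ℂ F]

/-! The coefficients are chosen so that the weight `1` on `Π₁ = γ|π⟩⟨π|` and the common weight
`ν₀ sin²θ` on the remaining `Π_m` add up, via `∑ Π_m = |π⟩⟨π| + |π⊥⟩⟨π⊥|`, to
`ν₀ sin²θ · |π⊥⟩⟨π⊥| + (γ + (1 - γ) ν₀ sin²θ) · |π⟩⟨π|`; the value `sin²θ = γ / (η₀ - (1 - γ) ν₀)`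
is exactly the solution of `γ + (1 - γ) ν₀ sin²θ = η₀ sin²θ`. -/

theorem Finset.sum_ite_eq_smul {ι R V : Type*} [Fintype ι] [DecidableEq ι] [Ring R]
    [AddCommGroup V] [Module R V] (f : ι → V) (i : ι) (a b : R) :
    ∑ j, (if j = i then a else b) • f j = b • ∑ j, f j + (a - b) • f i := by
  have hsplit : ∀ j,
      (if j = i then a else b) • f j = b • f j + if j = i then (a - b) • f i else 0 := by
    intro j
    split_ifs with h
    · rw [h, sub_smul, add_sub_cancel]
    · rw [add_zero]
  simp only [hsplit, Finset.sum_add_distrib, Finset.smul_sum, Finset.sum_ite_eq', Finset.mem_univ,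
    if_true]

lemma add_one_sub_mul_mul_div_eq {γ η ν : ℝ} (hD : η - (1 - γ) * ν ≠ 0) :
    γ + (1 - γ) * (ν * (γ / (η - (1 - γ) * ν))) = γ / (η - (1 - γ) * ν) * η := by
  field_simp
  ring

theorem prop2_coefficients_general
    {H : Type*} [NormedAddCommGroup H] [InnerProductSpace ℂ H]
    (M : ℕ) (hM : 0 < M) (pi pip : H)
    (Pv : Fin M → (H →ₗ[ℂ] H))
    (γ η0 ν0 : ℝ) (hγ0 : 0 < γ)
    (hP1 : Pv ⟨0, hM⟩ = ((γ : ℝ) : ℂ) • rankOne pi pi)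
    (hsum : ∑ m, Pv m = rankOne pi pi + rankOne pip pip)
    (hν0 : 0 ≤ ν0) (hν1 : ν0 ≤ 1)
    (hlt : γ < η0 - (1 - γ) * ν0) :
    (∀ m : Fin M,
        0 ≤ (if m = (⟨0, hM⟩ : Fin M) then (1 : ℝ) else ν0 * (γ / (η0 - (1 - γ) * ν0))) ∧
        (if m = (⟨0, hM⟩ : Fin M) then (1 : ℝ) else ν0 * (γ / (η0 - (1 - γ) * ν0))) ≤ 1) ∧
      γ / (η0 - (1 - γ) * ν0) ≤ 1 ∧
      ∑ m, (((if m = (⟨0, hM⟩ : Fin M) then (1 : ℝ)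
            else ν0 * (γ / (η0 - (1 - γ) * ν0))) : ℝ) : ℂ) • Pv m =
        ((γ / (η0 - (1 - γ) * ν0) : ℝ) : ℂ) •
          (((η0 : ℝ) : ℂ) • rankOne pi pi + ((ν0 : ℝ) : ℂ) • rankOne pip pip) := by
  have hD : 0 < η0 - (1 - γ) * ν0 := hγ0.trans hlt
  have hkey := add_one_sub_mul_mul_div_eq hD.ne'
  set s := γ / (η0 - (1 - γ) * ν0)
  have hs0 : 0 ≤ s := div_nonneg hγ0.le hD.le
  have hs1 : s ≤ 1 := div_le_one_of_le₀ hlt.le hD.le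
  refine ⟨fun m => ?_, hs1, ?_⟩
  · split_ifs
    · exact ⟨zero_le_one, le_rfl⟩
    · exact ⟨mul_nonneg hν0 hs0, mul_le_one₀ hν1 hs0 hs1⟩
  · replace hkey : (γ : ℂ) + (1 - γ) * (ν0 * s) = s * η0 := by exact_mod_cast hkey
    simp only [apply_ite (fun c : ℝ => (c : ℂ)), Finset.sum_ite_eq_smul, hsum, hP1]
    match_scalars
    · linear_combination hkey
    · ring

/-- Appendix C computation for Proposition 2. -/
theorem prop2_coefficients
    {H : Type*} [NormedAddCommGroup H] [InnerProductSpace ℂ H]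
    (M : ℕ) (hM : 0 < M) (pi pip : H) (hON : Orthonormal ℂ ![pi, pip])
    (Pv : Fin M → (H →ₗ[ℂ] H)) (hpsd : ∀ m, IsPSD (Pv m))
    (hrank : ∀ m, Module.finrank ℂ (LinearMap.range (Pv m)) ≤ 1)
    (γ η0 ν0 : ℝ) (hγ0 : 0 < γ) (hγ1 : γ ≤ 1)
    (hP1 : Pv ⟨0, hM⟩ = ((γ : ℝ) : ℂ) • rankOne pi pi)
    (hsum : ∑ m, Pv m = rankOne pi pi + rankOne pip pip)
    (hν0 : 0 ≤ ν0) (hν1 : ν0 ≤ 1) (hge : ν0 ≤ η0)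
    (hlt : γ < η0 - (1 - γ) * ν0) :
    (∀ m : Fin M,
        0 ≤ (if m = (⟨0, hM⟩ : Fin M) then (1 : ℝ) else ν0 * (γ / (η0 - (1 - γ) * ν0))) ∧
        (if m = (⟨0, hM⟩ : Fin M) then (1 : ℝ) else ν0 * (γ / (η0 - (1 - γ) * ν0))) ≤ 1) ∧
      γ / (η0 - (1 - γ) * ν0) ≤ 1 ∧
      ∑ m, (((if m = (⟨0, hM⟩ : Fin M) then (1 : ℝ)
            else ν0 * (γ / (η0 - (1 - γ) * ν0))) : ℝ) : ℂ) • Pv m =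
        ((γ / (η0 - (1 - γ) * ν0) : ℝ) : ℂ) •
          (((η0 : ℝ) : ℂ) • rankOne pi pi + ((ν0 : ℝ) : ℂ) • rankOne pip pip) :=
  prop2_coefficients_general M hM pi pip Pv γ η0 ν0 hγ0 hP1 hsum hν0 hν1 hlt
end
end

section
/- Any POVM on a finite-dimensional Hilbert space whose elements all have rank at most one and which is extremal in the convex set of POVMs with a fixed finite outcome set has the property that its nonzero elements are linearly independent as Hermitian operators. -/
noncomputable section
open scoped InnerProductSpace ComplexConjugate ComplexOrder

variable {E F : Type*} [NormedAddCommGroup E] [InnerProductSpace ℂ E]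
  [NormedAddCommGroup F] [InnerProductSpace ℂ F]

/-! A real linear relation `∑ cᵢ Pᵢ = 0` among the elements of a POVM `P` lets one perturb it:
for small `ε > 0` both `(1 + ε cᵢ) Pᵢ` and `(1 - ε cᵢ) Pᵢ` are again POVMs, and `P` is their
midpoint. Extremality then forces `ε cᵢ Pᵢ = 0`, i.e. `cᵢ = 0` whenever `Pᵢ ≠ 0`. -/

theorem IsPSD.real_smul {T : E →ₗ[ℂ] E} (hT : IsPSD T) {a : ℝ} (ha : 0 ≤ a) :
    IsPSD (a • T) := fun x => by
  rw [LinearMap.smul_apply, RCLike.real_smul_eq_coe_smul (K := ℂ), inner_smul_right]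
  exact mul_nonneg (Complex.zero_le_real.mpr ha) (hT x)

section POVM

variable {ι : Type*} [Fintype ι]

theorem exists_pos_forall_abs_mul_le_one (c : ι → ℝ) : ∃ ε > 0, ∀ i, |ε * c i| ≤ 1 := by
  have hpos : 0 < 1 + ∑ i, |c i| := by positivity
  refine ⟨(1 + ∑ i, |c i|)⁻¹, inv_pos.mpr hpos, fun i => ?_⟩
  rw [abs_mul, abs_of_pos (inv_pos.mpr hpos), inv_mul_le_one₀ hpos]
  linarith [Finset.single_le_sum (fun j _ => abs_nonneg (c j)) (Finset.mem_univ i)]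

theorem sum_one_add_mul_smul_of_sum_smul_eq_zero {V : Type*} [AddCommGroup V] [Module ℝ V]
    {v : ι → V} {c : ι → ℝ} (hc : ∑ i, c i • v i = 0) (s : ℝ) :
    ∑ i, (1 + s * c i) • v i = ∑ i, v i := by
  simp only [add_smul, one_smul, mul_smul, Finset.sum_add_distrib, ← Finset.smul_sum, hc,
    smul_zero, add_zero]

def IsPOVM (P : ι → E →ₗ[ℂ] E) : Prop :=
  (∀ i, IsPSD (P i)) ∧ ∑ i, P i = LinearMap.id

def IsExtremePOVM (P : ι → E →ₗ[ℂ] E) : Prop :=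
  IsPOVM P ∧ ∀ Q R : ι → E →ₗ[ℂ] E, IsPOVM Q → IsPOVM R → ∀ t : ℝ, 0 < t → t < 1 →
    (∀ i, P i = (t : ℂ) • Q i + ((1 - t : ℝ) : ℂ) • R i) → Q = P ∧ R = P

theorem IsPOVM.one_add_mul_smul {P : ι → E →ₗ[ℂ] E} (hP : IsPOVM P) {c : ι → ℝ}
    (hc : ∑ i, c i • P i = 0) {s : ℝ} (hs : ∀ i, |s * c i| ≤ 1) :
    IsPOVM fun i => (1 + s * c i) • P i :=
  ⟨fun i => (hP.1 i).real_smul (by linarith [(abs_le.mp (hs i)).1]),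
    by rw [sum_one_add_mul_smul_of_sum_smul_eq_zero hc, hP.2]⟩

theorem IsExtremePOVM.eq_zero_or_eq_zero_of_sum_smul_eq_zero {P : ι → E →ₗ[ℂ] E}
    (hP : IsExtremePOVM P) {c : ι → ℝ} (hc : ∑ i, c i • P i = 0) (i : ι) :
    c i = 0 ∨ P i = 0 := by
  obtain ⟨ε, hε, hεc⟩ := exists_pos_forall_abs_mul_le_one c
  have hεc' : ∀ i, |-ε * c i| ≤ 1 := fun i => by rw [neg_mul, abs_neg]; exact hεc i
  have hmid : ∀ i, P i = ((1 / 2 : ℝ) : ℂ) • ((1 + ε * c i) • P i) +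
      ((1 - 1 / 2 : ℝ) : ℂ) • ((1 + -ε * c i) • P i) := fun i => by
    rw [Complex.coe_smul, Complex.coe_smul, smul_smul, smul_smul, ← add_smul,
      show 1 / 2 * (1 + ε * c i) + (1 - 1 / 2) * (1 + -ε * c i) = 1 by ring, one_smul]
  have hfix := congrFun (hP.2 _ _ (hP.1.one_add_mul_smul hc hεc) (hP.1.one_add_mul_smul hc hεc')
    (1 / 2) (by norm_num) (by norm_num) hmid).1 i
  have : (ε * c i) • P i = 0 := by
    simpa only [add_smul, one_smul, add_eq_left] using hfix
  simpa [hε.ne'] using this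

theorem IsExtremePOVM.linearIndepOn {P : ι → E →ₗ[ℂ] E} (hP : IsExtremePOVM P) :
    LinearIndepOn ℝ P {i | P i ≠ 0} := by
  rw [linearIndepOn_iff]
  intro l hl hcomb
  rw [Finsupp.linearCombination_apply, Finsupp.sum_fintype _ _ (by simp)] at hcomb
  refine Finsupp.ext fun i => by_contra fun hli => ?_
  exact (hP.eq_zero_or_eq_zero_of_sum_smul_eq_zero hcomb i).elim hli
    (hl (Finsupp.mem_support_iff.mpr hli))

end POVM

theorem extremal_povm_linearIndependent_general
    {H : Type*} [NormedAddCommGroup H] [InnerProductSpace ℂ H]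
    (M : ℕ) (Pv : Fin M → (H →ₗ[ℂ] H))
    (hpsd : ∀ m, IsPSD (Pv m)) (hsum : ∑ m, Pv m = LinearMap.id)
    (hext : ∀ (Q R : Fin M → (H →ₗ[ℂ] H)),
      (∀ m, IsPSD (Q m)) → (∑ m, Q m = LinearMap.id) →
      (∀ m, IsPSD (R m)) → (∑ m, R m = LinearMap.id) →
      ∀ t : ℝ, 0 < t → t < 1 →
      (∀ m, Pv m = ((t : ℝ) : ℂ) • Q m + ((1 - t : ℝ) : ℂ) • R m) →
      Q = Pv ∧ R = Pv) :
    LinearIndependent ℝ (fun m : {m : Fin M // Pv m ≠ 0} => Pv m.1) :=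
  IsExtremePOVM.linearIndepOn
    ⟨⟨hpsd, hsum⟩, fun Q R hQ hR => hext Q R hQ.1 hQ.2 hR.1 hR.2⟩

/-- an extremal POVM whose elements have rank at most one has linearly
independent (over ℝ, as Hermitian operators) nonzero elements. -/
theorem extremal_povm_linearIndependent
    {H : Type*} [NormedAddCommGroup H] [InnerProductSpace ℂ H] [FiniteDimensional ℂ H]
    (M : ℕ) (Pv : Fin M → (H →ₗ[ℂ] H))
    (hpsd : ∀ m, IsPSD (Pv m)) (hsum : ∑ m, Pv m = LinearMap.id)
    (hrank : ∀ m, Module.finrank ℂ (LinearMap.range (Pv m)) ≤ 1)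
    (hext : ∀ (Q R : Fin M → (H →ₗ[ℂ] H)),
      (∀ m, IsPSD (Q m)) → (∑ m, Q m = LinearMap.id) →
      (∀ m, IsPSD (R m)) → (∑ m, R m = LinearMap.id) →
      ∀ t : ℝ, 0 < t → t < 1 →
      (∀ m, Pv m = ((t : ℝ) : ℂ) • Q m + ((1 - t : ℝ) : ℂ) • R m) →
      Q = Pv ∧ R = Pv) :
    LinearIndependent ℝ (fun m : {m : Fin M // Pv m ≠ 0} => Pv m.1) :=
  extremal_povm_linearIndependent_general M Pv hpsd hsum hext
end
end
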